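/- Let G, H be finite groups, α and θ unital partial actions of G on R₁ and H on R₂ (commutative k-algebras) with R₁^α = R₂^θ = k, such that R₁ ⊇ k is α-partial Galois and R₂ ⊇ k is θ-partial Galois. Then (R₁ ⊗_k R₂)^{α⊗θ} = k and R₁ ⊗_k R₂ ⊇ k is an (α ⊗_k θ)-partial Galois extension of the group G × H, with partial Galois coordinate system {xᵢ ⊗ u_j, yᵢ ⊗ z_j} obtained from coordinate systems of the two factors. -/

import Mathlib

/-!
The trace `tr r = ∑_g α_g (r 1_{g⁻¹})` takes values in the fixed ring, and a Galois coordinate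
system gives `b = ∑ᵢ xᵢ tr (yᵢ b)`. When the fixed ring is `k`, Nakayama's lemma then yields `c`
with `tr c = 1`, so every fixed `t` equals `tr (c t)`. For `α ⊗ θ` the trace of `a ⊗ b` is
`tr a ⊗ tr b`: traces again land in `k ⊗ k = k`, `c₁ ⊗ c₂` has trace `1`, and the defining sums
of the tensor coordinate system factor into those of the two factors.
-/

open TensorProduct

/-- A unital partial action `α = (D_g, α_g)` of a group `G` on a commutative
ring `R`: each `D_g` is the ideal generated by the idempotent `e g` and `α g`
is a ring isomorphism `D_{g⁻¹} → D_g`, encoded as a map `R → R` depending only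
on the `D_{g⁻¹}`-component. -/
structure PartialActionCRing (G : Type) [Group G] (R : Type) [CommRing R] where
  e : G → R
  α : G → R → R
  idem : ∀ g, IsIdempotentElem (e g)
  e_one : e 1 = 1
  α_one : ∀ r, α 1 r = r
  proj : ∀ g r, α g r = α g (r * e g⁻¹)
  map_add : ∀ g r s, α g (r + s) = α g r + α g s
  map_mul' : ∀ g r s, α g (r * s * e g⁻¹) = α g r * α g s
  map_e : ∀ g, α g (e g⁻¹) = e g
  mem : ∀ g r, α g r * e g = α g r
  inv_comp : ∀ g r, α g⁻¹ (α g (r * e g⁻¹)) = r * e g⁻¹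
  comp : ∀ g h r,
    α g (α h (r * e h⁻¹) * e g⁻¹) = α (g * h) (r * e (g * h)⁻¹) * e g
  rangeEq : ∀ g h, α g (e h * e g⁻¹) = e g * e (g * h)

variable {G R : Type} [Group G] [CommRing R]

/-- `B` is (isomorphic to) the twisted module `A_g`: the same abelian group as
`A`, with `R`-action `r • x = α_{g⁻¹}(r·1_g)·x`.  (Here `A` is assumed to be
annihilated by `1 - 1_{g⁻¹}`.) -/
def IsTwistOf (pa : PartialActionCRing G R) (g : G) (A B : Type)
    [AddCommGroup A] [Module R A] [AddCommGroup B] [Module R B] : Prop :=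
  ∃ φ : A ≃+ B, ∀ (r : R) (x : A), φ (pa.α g⁻¹ (r * pa.e g) • x) = r • φ x

/-- The `κ : k` with `algebraMap k A κ ∈ τ(A)` form an ideal `I` with `A = I • A`, so by Nakayama
some element of `I` acts as the identity on the finitely generated `k`-module `A`. -/
theorem LinearMap.exists_apply_eq_one_of_sum_mul_apply_mul_eq {k A ι : Type*} [CommRing k]
    [CommRing A] [Algebra k A] [Fintype ι] (τ : A →ₗ[k] A)
    (hτ : ∀ a, τ a ∈ Set.range (algebraMap k A)) (x y : ι → A)
    (hxy : ∀ b, ∑ i, x i * τ (y i * b) = b) : ∃ c, τ c = 1 := by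
  let I : Ideal k := (LinearMap.range τ).comap (Algebra.linearMap k A)
  let N : Submodule k A := Submodule.span k (Set.range x)
  have hmem : ∀ b, b ∈ I • N := fun b => by
    rw [← hxy b]
    refine Submodule.sum_mem _ fun i _ => ?_
    obtain ⟨κ, hκ⟩ := hτ (y i * b)
    rw [← hκ, mul_comm, ← Algebra.smul_def]
    exact Submodule.smul_mem_smul ⟨y i * b, hκ.symm⟩ (Submodule.subset_span ⟨i, rfl⟩)
  obtain ⟨r, ⟨c, hc⟩, hr⟩ := Submodule.exists_mem_and_smul_eq_self_of_fg_of_le_smul I N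
    (Submodule.fg_span (Set.finite_range x)) fun b _ => hmem b
  refine ⟨c, ?_⟩
  simpa [hc, Algebra.smul_def] using hr 1 (Submodule.smul_le_right (hmem 1))

lemma Algebra.TensorProduct.algebraMap_tmul_algebraMap {k A B : Type*} [CommSemiring k]
    [Semiring A] [Semiring B] [Algebra k A] [Algebra k B] (κ₁ κ₂ : k) :
    algebraMap k A κ₁ ⊗ₜ[k] algebraMap k B κ₂ = algebraMap k (A ⊗[k] B) (κ₁ * κ₂) := by
  rw [map_mul, algebraMap_apply, algebraMap_apply', tmul_mul_tmul, mul_one, one_mul]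

namespace PartialActionCRing

variable (pa : PartialActionCRing G R)

/-- The fixed ring `R^α`. -/
def IsFixed (r : R) : Prop := ∀ g, pa.α g (r * pa.e g⁻¹) = r * pa.e g

def IsGaloisCoordinateSystem [DecidableEq G] {ι : Type*} [Fintype ι] (x y : ι → R) : Prop :=
  ∀ g, ∑ i, x i * pa.α g (y i * pa.e g⁻¹) = if g = 1 then 1 else 0

def tr [Fintype G] (r : R) : R := ∑ g, pa.α g (r * pa.e g⁻¹)

lemma α_zero (g : G) : pa.α g 0 = 0 := by
  simpa using pa.map_add g 0 0

lemma tr_zero [Fintype G] : pa.tr 0 = 0 := by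
  simp [tr, α_zero]

lemma tr_add [Fintype G] (r s : R) : pa.tr (r + s) = pa.tr r + pa.tr s := by
  simp only [tr, add_mul, pa.map_add, Finset.sum_add_distrib]

lemma α_sum (g : G) {ι : Type*} (s : Finset ι) (f : ι → R) :
    pa.α g (∑ i ∈ s, f i) = ∑ i ∈ s, pa.α g (f i) :=
  map_sum (AddMonoidHom.mk' (pa.α g) (pa.map_add g)) f s

lemma isFixed_tr [Fintype G] (r : R) : pa.IsFixed (pa.tr r) := by
  intro g
  calc pa.α g (pa.tr r * pa.e g⁻¹)
      = ∑ g', pa.α (g * g') (r * pa.e (g * g')⁻¹) * pa.e g := by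
        simp only [tr, Finset.sum_mul, α_sum, pa.comp]
    _ = pa.tr r * pa.e g := by
        rw [← Finset.sum_mul, tr]
        congr 1
        exact Equiv.sum_comp (Equiv.mulLeft g) fun g' => pa.α g' (r * pa.e g'⁻¹)

variable {pa}

lemma IsFixed.α_mul_mul_e {t : R} (ht : pa.IsFixed t) (g : G) (w : R) :
    pa.α g (w * t * pa.e g⁻¹) = pa.α g (w * pa.e g⁻¹) * t :=
  calc pa.α g (w * t * pa.e g⁻¹) = pa.α g w * (t * pa.e g) := by
        rw [pa.map_mul', pa.proj g t, ht]
    _ = pa.α g w * pa.e g * t := by ring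
    _ = pa.α g (w * pa.e g⁻¹) * t := by rw [pa.mem, pa.proj]

lemma IsFixed.tr_mul [Fintype G] {t : R} (ht : pa.IsFixed t) (w : R) :
    pa.tr (w * t) = pa.tr w * t := by
  simp only [tr, ht.α_mul_mul_e, Finset.sum_mul]

lemma IsGaloisCoordinateSystem.sum_mul_tr_mul [Fintype G] [DecidableEq G] {ι : Type*}
    [Fintype ι] {x y : ι → R} (hxy : pa.IsGaloisCoordinateSystem x y) (b : R) :
    ∑ i, x i * pa.tr (y i * b) = b :=
  calc ∑ i, x i * pa.tr (y i * b)
      = ∑ g, (∑ i, x i * pa.α g (y i * pa.e g⁻¹)) * pa.α g b := by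
        simp only [tr, Finset.mul_sum, Finset.sum_mul, pa.map_mul']
        rw [Finset.sum_comm]
        simp only [← pa.proj, mul_assoc]
    _ = b := by simp [hxy _, pa.α_one]

variable {k : Type*} [CommRing k] [Algebra k R]

def trLinearMap [Fintype G] (hk : ∀ κ, pa.IsFixed (algebraMap k R κ)) : R →ₗ[k] R where
  toFun := pa.tr
  map_add' := pa.tr_add
  map_smul' κ r := by
    rw [RingHom.id_apply, Algebra.smul_def, Algebra.smul_def, mul_comm, (hk κ).tr_mul, mul_comm]

lemma exists_tr_eq_one [Fintype G] [DecidableEq G] {ι : Type*} [Fintype ι] {x y : ι → R}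
    (hinv : ∀ r, pa.IsFixed r ↔ r ∈ Set.range (algebraMap k R))
    (hxy : pa.IsGaloisCoordinateSystem x y) : ∃ c, pa.tr c = 1 :=
  (pa.trLinearMap fun κ => (hinv _).2 ⟨κ, rfl⟩).exists_apply_eq_one_of_sum_mul_apply_mul_eq
    (fun a => (hinv _).1 (pa.isFixed_tr a)) x y hxy.sum_mul_tr_mul

lemma isFixed_iff_mem_range_of_tr_eq_one [Fintype G]
    (hk : ∀ κ, pa.IsFixed (algebraMap k R κ)) (htr : ∀ r, pa.tr r ∈ Set.range (algebraMap k R))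
    {c : R} (hc : pa.tr c = 1) (t : R) : pa.IsFixed t ↔ t ∈ Set.range (algebraMap k R) := by
  refine ⟨fun ht => ?_, by rintro ⟨κ, rfl⟩; exact hk κ⟩
  simpa only [ht.tr_mul, hc, one_mul] using htr (c * t)

end PartialActionCRing

/-- `pa` is the partial action `α ⊗_k θ` of `G × H` on `R₁ ⊗_k R₂`. -/
structure PartialActionCRing.IsTensorProduct {H k R₁ R₂ : Type} [Group H] [CommRing k]
    [CommRing R₁] [CommRing R₂] [Algebra k R₁] [Algebra k R₂]
    (pa₁ : PartialActionCRing G R₁) (pa₂ : PartialActionCRing H R₂)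
    (pa : PartialActionCRing (G × H) (R₁ ⊗[k] R₂)) : Prop where
  e_eq : ∀ p, pa.e p = pa₁.e p.1 ⊗ₜ[k] pa₂.e p.2
  α_tmul : ∀ p r s, pa.α p (r ⊗ₜ[k] s) = pa₁.α p.1 r ⊗ₜ[k] pa₂.α p.2 s

namespace PartialActionCRing.IsTensorProduct

variable {H k R₁ R₂ : Type} [Group H] [CommRing k] [CommRing R₁] [CommRing R₂]
  [Algebra k R₁] [Algebra k R₂] {pa₁ : PartialActionCRing G R₁} {pa₂ : PartialActionCRing H R₂}
  {pa : PartialActionCRing (G × H) (R₁ ⊗[k] R₂)}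

lemma α_tmul_mul_e (hT : IsTensorProduct pa₁ pa₂ pa) (p : G × H) (a : R₁) (b : R₂) :
    pa.α p ((a ⊗ₜ[k] b) * pa.e p⁻¹)
      = pa₁.α p.1 (a * pa₁.e p.1⁻¹) ⊗ₜ[k] pa₂.α p.2 (b * pa₂.e p.2⁻¹) := by
  rw [hT.e_eq, Algebra.TensorProduct.tmul_mul_tmul, hT.α_tmul, Prod.fst_inv, Prod.snd_inv]

lemma tr_tmul [Fintype G] [Fintype H] (hT : IsTensorProduct pa₁ pa₂ pa) (a : R₁) (b : R₂) :
    pa.tr (a ⊗ₜ[k] b) = pa₁.tr a ⊗ₜ[k] pa₂.tr b := by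
  rw [tr, tr, tr, TensorProduct.sum_tmul, Fintype.sum_prod_type]
  simp only [hT.α_tmul_mul_e, TensorProduct.tmul_sum]

lemma tr_mem_range [Fintype G] [Fintype H] (hT : IsTensorProduct pa₁ pa₂ pa)
    (h₁ : ∀ a, pa₁.tr a ∈ Set.range (algebraMap k R₁))
    (h₂ : ∀ b, pa₂.tr b ∈ Set.range (algebraMap k R₂)) (w : R₁ ⊗[k] R₂) :
    pa.tr w ∈ Set.range (algebraMap k (R₁ ⊗[k] R₂)) := by
  induction w using TensorProduct.induction_on with
  | zero => exact ⟨0, by rw [map_zero, pa.tr_zero]⟩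
  | tmul a b =>
    obtain ⟨κ₁, hκ₁⟩ := h₁ a
    obtain ⟨κ₂, hκ₂⟩ := h₂ b
    refine ⟨κ₁ * κ₂, ?_⟩
    rw [hT.tr_tmul, ← hκ₁, ← hκ₂, Algebra.TensorProduct.algebraMap_tmul_algebraMap]
  | add w₁ w₂ ih₁ ih₂ =>
    obtain ⟨κ₁, hκ₁⟩ := ih₁
    obtain ⟨κ₂, hκ₂⟩ := ih₂
    exact ⟨κ₁ + κ₂, by rw [pa.tr_add, _root_.map_add, hκ₁, hκ₂]⟩

lemma isFixed_algebraMap (hT : IsTensorProduct pa₁ pa₂ pa)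
    (h₁ : ∀ κ, pa₁.IsFixed (algebraMap k R₁ κ)) (κ : k) :
    pa.IsFixed (algebraMap k (R₁ ⊗[k] R₂) κ) := by
  intro p
  rw [Algebra.TensorProduct.algebraMap_apply, hT.α_tmul_mul_e, h₁ κ p.1, one_mul, pa₂.map_e,
    hT.e_eq, Algebra.TensorProduct.tmul_mul_tmul, one_mul]

lemma isGaloisCoordinateSystem_tmul [DecidableEq G] [DecidableEq H] {ι κ : Type*} [Fintype ι]
    [Fintype κ] (hT : IsTensorProduct pa₁ pa₂ pa) {x y : ι → R₁} {u z : κ → R₂}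
    (hxy : pa₁.IsGaloisCoordinateSystem x y) (huz : pa₂.IsGaloisCoordinateSystem u z) :
    pa.IsGaloisCoordinateSystem (fun q : ι × κ => x q.1 ⊗ₜ[k] u q.2)
      (fun q => y q.1 ⊗ₜ[k] z q.2) := by
  rintro ⟨g, h⟩
  calc ∑ q : ι × κ, (x q.1 ⊗ₜ[k] u q.2) * pa.α (g, h) ((y q.1 ⊗ₜ[k] z q.2) * pa.e (g, h)⁻¹)
      = (∑ i, x i * pa₁.α g (y i * pa₁.e g⁻¹)) ⊗ₜ[k] ∑ j, u j * pa₂.α h (z j * pa₂.e h⁻¹) := by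
        rw [TensorProduct.sum_tmul, Fintype.sum_prod_type]
        simp only [hT.α_tmul_mul_e, Algebra.TensorProduct.tmul_mul_tmul, TensorProduct.tmul_sum]
    _ = if (g, h) = 1 then 1 else 0 := by
        rw [hxy g, huz h]
        by_cases hg : g = 1 <;> by_cases hh : h = 1 <;>
          simp [hg, hh, Prod.ext_iff, Algebra.TensorProduct.one_def]

end PartialActionCRing.IsTensorProduct

/-- The tensor product of partial Galois extensions is a partial Galois
extension: if `R₁ ⊇ k` is `α`-partial Galois for `G` and `R₂ ⊇ k` is
`θ`-partial Galois for `H`, with `R₁^α = R₂^θ = k`, then for the partial action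
`α ⊗_k θ` of `G × H` on `R₁ ⊗_k R₂` (with domains `D_g ⊗ I_h` and isomorphisms
`α_g ⊗ θ_h`) one has `(R₁ ⊗_k R₂)^{α⊗θ} = k`, and
`{xᵢ ⊗ u_j, yᵢ ⊗ z_j}` is an `(α ⊗_k θ)`-partial Galois coordinate system. -/
theorem tensor_of_partial_galois
    {G H : Type} [Group G] [Group H] [Fintype G] [Fintype H]
    [DecidableEq G] [DecidableEq H]
    (k R₁ R₂ : Type) [CommRing k] [CommRing R₁] [CommRing R₂]
    [Algebra k R₁] [Algebra k R₂]
    (pa₁ : PartialActionCRing G R₁) (pa₂ : PartialActionCRing H R₂)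
    -- `R₁^α = k` and `R₂^θ = k`
    (hinv₁ : ∀ r : R₁, (∀ g, pa₁.α g (r * pa₁.e g⁻¹) = r * pa₁.e g) ↔
      r ∈ Set.range (algebraMap k R₁))
    (hinv₂ : ∀ s : R₂, (∀ h, pa₂.α h (s * pa₂.e h⁻¹) = s * pa₂.e h) ↔
      s ∈ Set.range (algebraMap k R₂))
    -- partial Galois coordinate systems for the two factors
    (n₁ n₂ : ℕ) (x y : Fin n₁ → R₁) (u z : Fin n₂ → R₂)
    (hGal₁ : ∀ g : G,
      (∑ i, x i * pa₁.α g (y i * pa₁.e g⁻¹)) = if g = 1 then 1 else 0)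
    (hGal₂ : ∀ h : H,
      (∑ j, u j * pa₂.α h (z j * pa₂.e h⁻¹)) = if h = 1 then 1 else 0)
    -- the partial action `α ⊗_k θ` of `G × H` on `R₁ ⊗_k R₂`
    (pa' : PartialActionCRing (G × H) (R₁ ⊗[k] R₂))
    (he : ∀ p : G × H, pa'.e p = pa₁.e p.1 ⊗ₜ[k] pa₂.e p.2)
    (hα : ∀ (p : G × H) (r : R₁) (s : R₂),
      pa'.α p (r ⊗ₜ[k] s) = pa₁.α p.1 r ⊗ₜ[k] pa₂.α p.2 s) :
    -- `(R₁ ⊗_k R₂)^{α⊗θ} = k ⊗_k k = k`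
    (∀ t : R₁ ⊗[k] R₂,
      (∀ p : G × H, pa'.α p (t * pa'.e p⁻¹) = t * pa'.e p) ↔
        t ∈ Set.range (algebraMap k (R₁ ⊗[k] R₂)))
    -- `{xᵢ ⊗ u_j, yᵢ ⊗ z_j}` is a partial Galois coordinate system
    ∧ (∀ p : G × H,
        (∑ i, ∑ j, (x i ⊗ₜ[k] u j) * pa'.α p ((y i ⊗ₜ[k] z j) * pa'.e p⁻¹))
          = if p = 1 then 1 else 0) := by
  have hT : pa₁.IsTensorProduct pa₂ pa' := ⟨he, hα⟩
  obtain ⟨c₁, hc₁⟩ := pa₁.exists_tr_eq_one hinv₁ hGal₁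
  obtain ⟨c₂, hc₂⟩ := pa₂.exists_tr_eq_one hinv₂ hGal₂
  have hfix : ∀ κ, pa'.IsFixed (algebraMap k (R₁ ⊗[k] R₂) κ) :=
    hT.isFixed_algebraMap fun κ => (hinv₁ _).2 ⟨κ, rfl⟩
  have htr : ∀ w, pa'.tr w ∈ Set.range (algebraMap k (R₁ ⊗[k] R₂)) :=
    hT.tr_mem_range (fun a => (hinv₁ _).1 (pa₁.isFixed_tr a))
      (fun b => (hinv₂ _).1 (pa₂.isFixed_tr b))
  have htr_one : pa'.tr (c₁ ⊗ₜ[k] c₂) = 1 := by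
    rw [hT.tr_tmul, hc₁, hc₂, Algebra.TensorProduct.one_def]
  refine ⟨pa'.isFixed_iff_mem_range_of_tr_eq_one hfix htr htr_one, fun p => ?_⟩
  simpa only [Fintype.sum_prod_type] using hT.isGaloisCoordinateSystem_tmul hGal₁ hGal₂ p
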